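/- Let B and Γ be disjoint nonempty compact subsets of ℝ². Define γ : B × S¹ → [0,∞] by γ(x,θ) = inf{t > 0 : x + t·(cos θ, sin θ) ∈ Γ} if the ray/line intersects Γ, and = ∞ otherwise. Then γ is lower semi-continuous. -/

import Mathlib

open MeasureTheory Metric Set Filter
open scoped RealInnerProductSpace ENNReal NNReal Topology

noncomputable section

abbrev E2 : Type := EuclideanSpace ℝ (Fin 2)

/-- The unit vector in direction `θ`. -/
def dir (θ : ℝ) : E2 := WithLp.toLp 2 ![Real.cos θ, Real.sin θ]

/-- The first hitting "time" of the set `Γ` along the ray from `x` in direction `θ`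
(`∞` if the ray misses `Γ`; the infimum of the empty set in `ℝ≥0∞` is `∞`). -/
def gammaFn (Γ : Set E2) (x : E2) (θ : ℝ) : ℝ≥0∞ :=
  sInf {t : ℝ≥0∞ | ∃ s : ℝ, 0 < s ∧ t = ENNReal.ofReal s ∧ x + s • dir θ ∈ Γ}

lemma continuous_dir : Continuous dir := by
  have : Continuous fun θ : ℝ => (![Real.cos θ, Real.sin θ] : Fin 2 → ℝ) := by
    refine continuous_pi fun i => ?_
    fin_cases i <;> simp <;> fun_prop
  exact (PiLp.continuous_toLp 2 _).comp this

/-- Lemma 3.1 (first part): the first-hitting function `γ` is lower semi-continuous on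
`B × S¹` (the circle being parameterized by the angle `θ ∈ ℝ`). -/
theorem stmt6 (B Γ : Set E2) (hB : IsCompact B) (hΓ : IsCompact Γ)
    (hBne : B.Nonempty) (hΓne : Γ.Nonempty) (hdisj : Disjoint B Γ) :
    LowerSemicontinuousOn (fun p : E2 × ℝ => gammaFn Γ p.1 p.2) (B ×ˢ (univ : Set ℝ)) := by
  intro p hp c hc
  have hxB : p.1 ∈ B := (mem_prod.mp hp).1
  obtain ⟨c', hcc', hc'γ⟩ := exists_between hc
  have hc'top : c' ≠ ⊤ := hc'γ.ne_top
  set r : ℝ := c'.toReal with hr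
  have hr0 : 0 ≤ r := ENNReal.toReal_nonneg
  have hofr : ENNReal.ofReal r = c' := ENNReal.ofReal_toReal hc'top
  -- the segment misses Γ
  have hseg : ∀ s ∈ Icc (0:ℝ) r, p.1 + s • dir p.2 ∉ Γ := by
    rintro s ⟨hs0, hsr⟩ hmem
    rcases hs0.eq_or_lt with h | h
    · apply absurd hmem
      have : p.1 + s • dir p.2 = p.1 := by simp [← h]
      rw [this]
      exact disjoint_left.mp hdisj hxB
    · have : gammaFn Γ p.1 p.2 ≤ ENNReal.ofReal s :=
        sInf_le ⟨s, h, rfl, hmem⟩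
      have : gammaFn Γ p.1 p.2 ≤ c' := this.trans (by rw [← hofr]; exact ENNReal.ofReal_le_ofReal hsr)
      exact absurd (hc'γ.trans_le this) (lt_irrefl _)
  -- positive distance ε from segment to Γ
  have hΓc : IsClosed Γ := hΓ.isClosed
  have hgc : ContinuousOn (fun s : ℝ => infDist (p.1 + s • dir p.2) Γ) (Icc 0 r) :=
    ((continuous_infDist_pt Γ).comp (by fun_prop : Continuous fun s : ℝ => p.1 + s • dir p.2)).continuousOn
  obtain ⟨s₀, hs₀, hmin⟩ := isCompact_Icc.exists_isMinOn (nonempty_Icc.mpr hr0) hgc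
  set ε : ℝ := infDist (p.1 + s₀ • dir p.2) Γ with hε
  have hε0 : 0 < ε := by
    rw [hε, ← hΓc.notMem_iff_infDist_pos hΓne]
    exact hseg s₀ hs₀
  have hεle : ∀ s ∈ Icc (0:ℝ) r, ε ≤ infDist (p.1 + s • dir p.2) Γ := fun s hs => hmin hs
  -- continuity: eventually the perturbation is < ε
  have hcont : ContinuousAt (fun q : E2 × ℝ => dist q.1 p.1 + r * dist (dir q.2) (dir p.2)) p := by
    have := continuous_dir
    fun_prop
  have h0 : dist p.1 p.1 + r * dist (dir p.2) (dir p.2) < ε := by simpa using hε0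
  have hev : ∀ᶠ q : E2 × ℝ in 𝓝 p, dist q.1 p.1 + r * dist (dir q.2) (dir p.2) < ε :=
    hcont.eventually (gt_mem_nhds h0)
  refine ((hev.mono ?_).filter_mono nhdsWithin_le_nhds)
  intro q hq
  refine hcc'.trans_le (le_sInf ?_)
  rintro t ⟨s, hs0, rfl, hhit⟩
  rw [← hofr]
  apply ENNReal.ofReal_le_ofReal
  by_contra hsr
  push_neg at hsr
  have hsIcc : s ∈ Icc (0:ℝ) r := ⟨hs0.le, hsr.le⟩
  have hd1 : dist (p.1 + s • dir p.2) (q.1 + s • dir q.2)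
      ≤ dist p.1 q.1 + s * dist (dir p.2) (dir q.2) := by
    calc dist (p.1 + s • dir p.2) (q.1 + s • dir q.2)
        ≤ dist p.1 q.1 + dist (s • dir p.2) (s • dir q.2) := dist_add_add_le _ _ _ _
      _ = dist p.1 q.1 + |s| * dist (dir p.2) (dir q.2) := by rw [dist_smul₀, Real.norm_eq_abs]
      _ = dist p.1 q.1 + s * dist (dir p.2) (dir q.2) := by rw [abs_of_nonneg hs0.le]
  have hd2 : dist p.1 q.1 + s * dist (dir p.2) (dir q.2)
      ≤ dist q.1 p.1 + r * dist (dir q.2) (dir p.2) := by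
    rw [dist_comm p.1 q.1, dist_comm (dir p.2) (dir q.2)]
    gcongr
  have hlt : dist (p.1 + s • dir p.2) (q.1 + s • dir q.2) < ε :=
    (hd1.trans hd2).trans_lt hq
  have : ε ≤ dist (p.1 + s • dir p.2) (q.1 + s • dir q.2) :=
    (hεle s hsIcc).trans (infDist_le_dist_of_mem hhit)
  exact absurd hlt (not_lt.mpr this)
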